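/- Let g(x) = (1/6)(3 − 2x + √(6 − 6√2 x + 4x²)). Then for every Q ∈ [0, 1/6], the infimum over x ∈ ℝ of x·Q + g(x) equals B(Q) = 1/2 + (1/2)√(Q(1 − 3Q/2)) − (√2/4)(1 − 3Q). -/

import Mathlib

/-- `g(x) = (1/6)(3 − 2x + √(6 − 6√2 x + 4x²))`, well-defined on all of ℝ. -/
noncomputable def gSARG (x : ℝ) : ℝ :=
  (1 / 6) * (3 - 2 * x + Real.sqrt (6 - 6 * Real.sqrt 2 * x + 4 * x ^ 2))

/-- The SARG two-photon phase-error bound. -/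
noncomputable def Bsarg (Q : ℝ) : ℝ :=
  1 / 2 + (1 / 2) * Real.sqrt (Q * (1 - 3 * Q / 2)) - (Real.sqrt 2 / 4) * (1 - 3 * Q)

/-- Lower bound: every member of the affine family dominates `Bsarg Q`. -/
lemma Bsarg_le_affine (Q : ℝ) (hQ0 : 0 ≤ Q) (hQ1 : Q ≤ 1/6) (x : ℝ) :
    Bsarg Q ≤ x * Q + gSARG x := by
  have hs0 : 0 < Real.sqrt 2 := Real.sqrt_pos.mpr (by norm_num)
  have hs2 : Real.sqrt 2 ^ 2 = 2 := Real.sq_sqrt (by norm_num)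
  set s := Real.sqrt 2 with hsdef
  have hQr : 0 ≤ Q * (1 - 3 * Q / 2) := by nlinarith
  set r := Real.sqrt (Q * (1 - 3 * Q / 2)) with hrdef
  have hr0 : 0 ≤ r := Real.sqrt_nonneg _
  have hr2 : r ^ 2 = Q * (1 - 3 * Q / 2) := Real.sq_sqrt hQr
  have hDpos : (0:ℝ) ≤ 6 - 6 * s * x + 4 * x ^ 2 := by nlinarith [sq_nonneg (2*x - (3/2)*s)]
  set d := Real.sqrt (6 - 6 * s * x + 4 * x ^ 2) with hddef
  have hd0 : 0 ≤ d := Real.sqrt_nonneg _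
  have hd2 : d ^ 2 = 6 - 6 * s * x + 4 * x ^ 2 := Real.sq_sqrt hDpos
  rw [Bsarg, gSARG, ← hsdef, ← hrdef, ← hddef]
  have key : 2 * (1 - 3*Q) * x + 3*r - (3*s/2) * (1 - 3*Q) ≤ d := by
    rcases le_or_gt (2 * (1 - 3*Q) * x + 3*r - (3*s/2) * (1 - 3*Q)) 0 with h | h
    · linarith
    · have hsq : (2 * (1 - 3*Q) * x + 3*r - (3*s/2) * (1 - 3*Q))^2 ≤ d^2 := by
        nlinarith [sq_nonneg (4*r*x - 3*s*r - (1 - 3*Q))]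
      nlinarith
  linarith

/-- For every `Q ∈ [0, 1/6]`, the infimum over `x ∈ ℝ` of `x·Q + g(x)` equals `B(Q)`. -/
theorem inf_affine_family_eq_Bsarg (Q : ℝ) (hQ : Q ∈ Set.Icc (0 : ℝ) (1 / 6)) :
    sInf (Set.range fun x : ℝ => x * Q + gSARG x) = Bsarg Q := by
  obtain ⟨hQ0, hQ1⟩ := hQ
  have hne : (Set.range fun x : ℝ => x * Q + gSARG x).Nonempty := ⟨_, ⟨0, rfl⟩⟩
  have hlb : ∀ y ∈ Set.range fun x : ℝ => x * Q + gSARG x, Bsarg Q ≤ y := by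
    rintro y ⟨x, rfl⟩; exact Bsarg_le_affine Q hQ0 hQ1 x
  have hbdd : BddBelow (Set.range fun x : ℝ => x * Q + gSARG x) := ⟨Bsarg Q, hlb⟩
  apply le_antisymm _ (le_csInf hne hlb)
  have hs0 : 0 < Real.sqrt 2 := Real.sqrt_pos.mpr (by norm_num)
  have hs2 : Real.sqrt 2 ^ 2 = 2 := Real.sq_sqrt (by norm_num)
  set s := Real.sqrt 2 with hsdef
  rcases eq_or_lt_of_le hQ0 with h0 | h0
  · -- Q = 0 : the infimum is approached as x → ∞
    subst h0
    by_contra hcon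
    push_neg at hcon
    set I := sInf (Set.range fun x : ℝ => x * 0 + gSARG x) with hI
    have hB0 : Bsarg 0 = 1/2 - s/4 := by
      rw [Bsarg, ← hsdef]; norm_num
    set ε := (I - Bsarg 0) / 2 with hε
    have hε0 : 0 < ε := by rw [hε]; linarith
    set x : ℝ := ((3*s/2) + 1/(4*ε)) / 2 with hx
    have hR : 2 * x - 3*s/2 = 1/(4*ε) := by rw [hx]; ring
    have hRpos : (0:ℝ) < 1/(4*ε) := by positivity
    have hDpos : (0:ℝ) ≤ 6 - 6 * s * x + 4 * x ^ 2 := by nlinarith [sq_nonneg (2*x - (3/2)*s)]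
    set d := Real.sqrt (6 - 6 * s * x + 4 * x ^ 2) with hddef
    have hd0 : 0 ≤ d := Real.sqrt_nonneg _
    have hd2 : d ^ 2 = 6 - 6 * s * x + 4 * x ^ 2 := Real.sq_sqrt hDpos
    have hdd : d ^ 2 - (2*x - 3*s/2)^2 = 3/2 := by
      rw [hd2]; linear_combination (-9/4 : ℝ) * hs2
    have hsum : 0 < d + (2*x - 3*s/2) := by rw [hR]; linarith
    have h1 : (d - (2*x - 3*s/2)) * (d + (2*x - 3*s/2)) = 3/2 := by
      linear_combination hdd
    have h3 : d - (2*x - 3*s/2) = (3/2) / (d + (2*x - 3*s/2)) :=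
      (eq_div_iff (ne_of_gt hsum)).mpr h1
    have hdiff : d - (2*x - 3*s/2) ≤ 6 * ε := by
      rw [h3, div_le_iff₀ hsum]
      have h2 : 1/(4*ε) ≤ d + (2*x - 3*s/2) := by rw [hR]; linarith
      calc (3:ℝ)/2 = 6*ε * (1/(4*ε)) := by field_simp; ring
        _ ≤ 6*ε * (d + (2*x - 3*s/2)) :=
            mul_le_mul_of_nonneg_left h2 (by positivity)
    have hval : x * 0 + gSARG x ≤ Bsarg 0 + ε := by
      rw [gSARG, hB0, ← hsdef, ← hddef]
      linarith
    have hle : I ≤ x * 0 + gSARG x := csInf_le hbdd ⟨x, rfl⟩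
    rw [hε] at hval
    linarith
  · -- Q > 0 : the minimum is attained
    have hQr : 0 < Q * (1 - 3 * Q / 2) := by nlinarith
    set r := Real.sqrt (Q * (1 - 3 * Q / 2)) with hrdef
    have hr0 : 0 < r := Real.sqrt_pos.mpr hQr
    have hr2 : r ^ 2 = Q * (1 - 3 * Q / 2) := Real.sq_sqrt (le_of_lt hQr)
    set x : ℝ := (3*s*r + (1 - 3*Q)) / (4*r) with hx
    have hDpos : (0:ℝ) ≤ 6 - 6 * s * x + 4 * x ^ 2 := by nlinarith [sq_nonneg (2*x - (3/2)*s)]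
    set d := Real.sqrt (6 - 6 * s * x + 4 * x ^ 2) with hddef
    have hd0 : 0 ≤ d := Real.sqrt_nonneg _
    have hd2 : d ^ 2 = 6 - 6 * s * x + 4 * x ^ 2 := Real.sq_sqrt hDpos
    have hhint : 4*r*x - 3*s*r - (1 - 3*Q) = 0 := by
      rw [hx]; field_simp; ring
    have hReq : d ^ 2 = (2 * (1 - 3*Q) * x + 3*r - (3*s/2) * (1 - 3*Q))^2 := by
      linear_combination hd2 + ((3:ℝ)/2 * (4*r*x - 3*s*r - (1 - 3*Q))) * hhint +
        (-9/4 + 27/2*Q - 81/4*Q^2 - 27/2*r^2) * hs2 + (-36 + 36*x*s - 24*x^2) * hr2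
    have hRpos : 0 ≤ 2 * (1 - 3*Q) * x + 3*r - (3*s/2) * (1 - 3*Q) := by
      have hxval : 2 * (1 - 3*Q) * x = (3*s*(1-3*Q))/2 + (1-3*Q)^2/(2*r) := by
        rw [hx]; field_simp; ring
      have h4 : 0 ≤ (1-3*Q)^2/(2*r) := by positivity
      rw [hxval]; linarith
    have hdR : d = 2 * (1 - 3*Q) * x + 3*r - (3*s/2) * (1 - 3*Q) := by
      nlinarith [hReq, sq_nonneg (d - (2 * (1 - 3*Q) * x + 3*r - (3*s/2) * (1 - 3*Q)))]
    have hmem : x * Q + gSARG x = Bsarg Q := by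
      rw [gSARG, Bsarg, ← hsdef, ← hrdef, ← hddef, hdR]
      ring
    calc sInf (Set.range fun x : ℝ => x * Q + gSARG x) ≤ x * Q + gSARG x :=
          csInf_le hbdd ⟨x, rfl⟩
      _ = Bsarg Q := hmem
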